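/- Let A be a d×d random matrix and X, Y ∈ ℝ^{d×d} with ‖X‖_F = ‖Y‖_F = 1, such that u := ⟨A,X⟩ and v := ⟨A,Y⟩ are jointly Gaussian N(0,1) with correlation ρ = ⟨X,Y⟩, and let s be independent of A. Then E[Sign(⟨A,X⟩+s)·⟨A,Y⟩] = √(2/π)·E[exp(-s²/2)]·⟨X,Y⟩. -/

import Mathlib

open MeasureTheory ProbabilityTheory

/-- The sign function: `Sign x = x / |x|` for `x ≠ 0`, `Sign 0 = 0`. -/
noncomputable def signFun (x : ℝ) : ℝ := if x = 0 then 0 else x / |x|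

/-- The trace (Frobenius) inner product `⟨X,Y⟩ = Tr(Xᵀ Y) = ∑ᵢⱼ Xᵢⱼ Yᵢⱼ`. -/
noncomputable def frobInner {d : ℕ} (X Y : Matrix (Fin d) (Fin d) ℝ) : ℝ :=
  ∑ i, ∑ j, X i j * Y i j

/-- The Frobenius norm. -/
noncomputable def frobNorm {d : ℕ} (X : Matrix (Fin d) (Fin d) ℝ) : ℝ :=
  Real.sqrt (frobInner X X)

/-! Write `⟨A,Y⟩ = ρ u + √(1-ρ²) w` with `u = ⟨A,X⟩`. The `w`-term has expectation zero, since
`w` is centred and independent of `(u, s)`. For the `u`-term, integrate first over `u` at fixed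
`s = t`: as `-φ` is an antiderivative of `x φ(x)` for the standard Gaussian density `φ`,
splitting at `x = -t` gives `∫ Sign(x + t) x φ(x) dx = 2 φ(t) = √(2/π) exp(-t²/2)`. -/

open Real Set Filter Topology

@[fun_prop]
lemma measurable_signFun : Measurable signFun :=
  Measurable.ite measurableSet_eq measurable_const (measurable_id.div measurable_id.abs)

lemma abs_signFun_le_one (x : ℝ) : |signFun x| ≤ 1 := by
  rcases eq_or_ne x 0 with rfl | hx
  · simp [signFun]
  · rw [signFun, if_neg hx, abs_div, abs_abs, div_self (abs_ne_zero.mpr hx)]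

lemma signFun_of_pos {x : ℝ} (hx : 0 < x) : signFun x = 1 := by
  rw [signFun, if_neg hx.ne', abs_of_pos hx, div_self hx.ne']

lemma signFun_of_neg {x : ℝ} (hx : x < 0) : signFun x = -1 := by
  rw [signFun, if_neg hx.ne, abs_of_neg hx, div_neg, div_self hx.ne]

lemma MeasureTheory.Integrable.signFun_mul {α : Type*} [MeasurableSpace α] {μ : Measure α}
    {f g : α → ℝ} (hf : Integrable f μ) (hg : AEMeasurable g μ) :
    Integrable (fun x => signFun (g x) * f x) μ :=
  hf.bdd_mul (measurable_signFun.comp_aemeasurable hg).aestronglyMeasurable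
    (ae_of_all _ fun x => by simpa only [Real.norm_eq_abs] using abs_signFun_le_one (g x))

lemma sqrt_two_div_pi_eq : √(2 / π) = 2 * (√(2 * π))⁻¹ := by
  rw [show 2 / π = 2 ^ 2 / (2 * π) by field_simp, sqrt_div (by positivity),
    sqrt_sq zero_le_two, div_eq_mul_inv]

namespace ProbabilityTheory

lemma gaussianPDFReal_zero_one (x : ℝ) :
    gaussianPDFReal 0 1 x = (√(2 * π))⁻¹ * exp (-x ^ 2 / 2) := by
  simp [gaussianPDFReal]

lemma gaussianPDFReal_zero_one_neg (x : ℝ) :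
    gaussianPDFReal 0 1 (-x) = gaussianPDFReal 0 1 x := by
  simp only [gaussianPDFReal_zero_one, neg_sq]

lemma hasDerivAt_neg_gaussianPDFReal_zero_one (x : ℝ) :
    HasDerivAt (fun y => -gaussianPDFReal 0 1 y) (x * gaussianPDFReal 0 1 x) x := by
  have h : HasDerivAt (fun y : ℝ => -y ^ 2 / 2) (-x) x :=
    ((hasDerivAt_pow 2 x).neg.div_const 2).congr_deriv (by ring)
  simp_rw [gaussianPDFReal_zero_one]
  exact (h.exp.const_mul (√(2 * π))⁻¹).neg.congr_deriv (by ring)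

lemma tendsto_gaussianPDFReal_zero_one_cocompact :
    Tendsto (gaussianPDFReal 0 1) (cocompact ℝ) (𝓝 0) := by
  have h := (tendsto_rpow_abs_mul_exp_neg_mul_sq_cocompact (a := 1 / 2) (by norm_num) 0).const_mul
    (√(2 * π))⁻¹
  rw [mul_zero] at h
  convert h using 2 with x
  rw [gaussianPDFReal_zero_one, rpow_zero, one_mul]
  ring_nf

lemma integrable_mul_gaussianPDFReal_zero_one :
    Integrable fun x => x * gaussianPDFReal 0 1 x := by
  convert (integrable_mul_exp_neg_mul_sq (b := 1 / 2) (by norm_num)).const_mul (√(2 * π))⁻¹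
    using 2 with x
  rw [gaussianPDFReal_zero_one]
  ring_nf

lemma integral_Ioi_mul_gaussianPDFReal_zero_one (a : ℝ) :
    ∫ x in Ioi a, x * gaussianPDFReal 0 1 x = gaussianPDFReal 0 1 a := by
  have h := integral_Ioi_of_hasDerivAt_of_tendsto' (a := a) (m := 0)
    (fun x _ => hasDerivAt_neg_gaussianPDFReal_zero_one x)
    integrable_mul_gaussianPDFReal_zero_one.integrableOn
    (by simpa using (tendsto_gaussianPDFReal_zero_one_cocompact.mono_left atTop_le_cocompact).neg)
  simpa using h

lemma integral_Iio_mul_gaussianPDFReal_zero_one (a : ℝ) :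
    ∫ x in Iio a, x * gaussianPDFReal 0 1 x = -gaussianPDFReal 0 1 a := by
  have h := integral_Iic_of_hasDerivAt_of_tendsto' (a := a) (m := 0)
    (fun x _ => hasDerivAt_neg_gaussianPDFReal_zero_one x)
    integrable_mul_gaussianPDFReal_zero_one.integrableOn
    (by simpa using (tendsto_gaussianPDFReal_zero_one_cocompact.mono_left atBot_le_cocompact).neg)
  simpa [integral_Iic_eq_integral_Iio] using h

lemma integral_signFun_add_mul_gaussianReal (t : ℝ) :
    ∫ x, signFun (x + t) * x ∂gaussianReal 0 1 = √(2 / π) * exp (-t ^ 2 / 2) := by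
  have hint : Integrable fun x => gaussianPDFReal 0 1 x • (signFun (x + t) * x) := by
    convert integrable_mul_gaussianPDFReal_zero_one.signFun_mul
      (measurable_add_const t).aemeasurable using 2 with x
    rw [smul_eq_mul]; ring
  have hIoi : ∫ x in Ioi (-t), gaussianPDFReal 0 1 x • (signFun (x + t) * x)
      = gaussianPDFReal 0 1 t := by
    rw [setIntegral_congr_fun measurableSet_Ioi (g := fun x => x * gaussianPDFReal 0 1 x)
        fun x hx => ?_, integral_Ioi_mul_gaussianPDFReal_zero_one, gaussianPDFReal_zero_one_neg]
    rw [smul_eq_mul, signFun_of_pos (neg_lt_iff_pos_add.mp hx)]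
    ring
  have hIio : ∫ x in Iio (-t), gaussianPDFReal 0 1 x • (signFun (x + t) * x)
      = gaussianPDFReal 0 1 t := by
    rw [setIntegral_congr_fun measurableSet_Iio (g := fun x => -(x * gaussianPDFReal 0 1 x))
        fun x hx => ?_, integral_neg, integral_Iio_mul_gaussianPDFReal_zero_one,
        gaussianPDFReal_zero_one_neg, neg_neg]
    rw [smul_eq_mul, signFun_of_neg (lt_neg_iff_add_neg.mp hx)]
    ring
  rw [integral_gaussianReal_eq_integral_smul one_ne_zero,
    ← intervalIntegral.integral_Iic_add_Ioi hint.integrableOn hint.integrableOn,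
    integral_Iic_eq_integral_Iio, hIio, hIoi, gaussianPDFReal_zero_one, sqrt_two_div_pi_eq]
  ring

variable {Ω : Type*} {mΩ : MeasurableSpace Ω} {P : Measure Ω}

lemma HasLaw.integrable_of_gaussianReal {U : Ω → ℝ} {m : ℝ} {v : NNReal}
    (hU : HasLaw U (gaussianReal m v) P) : Integrable U P := by
  have h : Integrable id (P.map U) := by
    rw [hU.map_eq]
    exact (memLp_id_gaussianReal 1).integrable le_rfl
  exact h.comp_aemeasurable hU.aemeasurable

lemma integral_signFun_add_mul_of_indepFun [IsFiniteMeasure P] {U S : Ω → ℝ}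
    (hU : HasLaw U (gaussianReal 0 1) P) (hS : AEMeasurable S P) (hUS : U ⟂ᵢ[P] S) :
    ∫ ω, signFun (U ω + S ω) * U ω ∂P = √(2 / π) * ∫ ω, exp (-S ω ^ 2 / 2) ∂P := by
  have hS' : HasLaw S (P.map S) P := ⟨hS, rfl⟩
  have hF : Integrable (fun p : ℝ × ℝ => signFun (p.1 + p.2) * p.1)
      ((gaussianReal 0 1).prod (P.map S)) :=
    (((memLp_id_gaussianReal 1).integrable le_rfl).comp_fst _).signFun_mul (by fun_prop)
  calc ∫ ω, signFun (U ω + S ω) * U ω ∂P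
      = ∫ t, ∫ x, signFun (x + t) * x ∂gaussianReal 0 1 ∂P.map S := by
        rw [← integral_prod_symm _ hF]
        exact (hUS.hasLaw_prod hU hS').integral_comp hF.aestronglyMeasurable
    _ = ∫ t, √(2 / π) * exp (-t ^ 2 / 2) ∂P.map S := by
        simp_rw [integral_signFun_add_mul_gaussianReal]
    _ = √(2 / π) * ∫ ω, exp (-S ω ^ 2 / 2) ∂P := by
        rw [integral_const_mul, ← hS'.integral_comp (by fun_prop), Function.comp_def]

lemma integral_signFun_add_mul_eq_zero_of_indepFun {U S W : Ω → ℝ} (hU : Measurable U)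
    (hS : Measurable S) (hW : AEStronglyMeasurable W P)
    (hUSW : (fun ω => (U ω, S ω)) ⟂ᵢ[P] W) (hW0 : ∫ ω, W ω ∂P = 0) :
    ∫ ω, signFun (U ω + S ω) * W ω ∂P = 0 := by
  have hSgnW : (fun ω => signFun (U ω + S ω)) ⟂ᵢ[P] W :=
    hUSW.comp (φ := fun p : ℝ × ℝ => signFun (p.1 + p.2)) (ψ := id) (by fun_prop)
      measurable_id
  rw [hSgnW.integral_fun_mul_eq_mul_integral
    (measurable_signFun.comp (hU.add hS)).aestronglyMeasurable hW, hW0, mul_zero]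

end ProbabilityTheory

theorem sign_gaussian_matrix_expectation_general
    {Ω : Type*} [MeasurableSpace Ω] (μ : Measure Ω) [IsProbabilityMeasure μ]
    {d : ℕ} (A : Ω → Matrix (Fin d) (Fin d) ℝ) (s w : Ω → ℝ)
    (X Y : Matrix (Fin d) (Fin d) ℝ)
    (ρ : ℝ) (hρ : ρ = frobInner X Y)
    (hum : Measurable fun ω => frobInner (A ω) X)
    (hwm : Measurable w) (hsm : Measurable s)
    (hu : μ.map (fun ω => frobInner (A ω) X) = gaussianReal 0 1)
    (hw : μ.map w = gaussianReal 0 1)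
    (hvdec : ∀ ω, frobInner (A ω) Y
      = ρ * frobInner (A ω) X + Real.sqrt (1 - ρ ^ 2) * w ω)
    (hind : iIndepFun
      ![fun ω => frobInner (A ω) X, w, s] μ) :
    ∫ ω, signFun (frobInner (A ω) X + s ω) * frobInner (A ω) Y ∂μ
      = Real.sqrt (2 / Real.pi) * (∫ ω, Real.exp (-(s ω) ^ 2 / 2) ∂μ) * frobInner X Y := by
  set u := fun ω => frobInner (A ω) X
  have hU : HasLaw u (gaussianReal 0 1) μ := ⟨hum.aemeasurable, hu⟩
  have hW : HasLaw w (gaussianReal 0 1) μ := ⟨hwm.aemeasurable, hw⟩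
  have hmeas : ∀ i, Measurable (![u, w, s] i) := fun i => by fin_cases i <;> assumption
  have hUS : u ⟂ᵢ[μ] s := by simpa using hind.indepFun (show (0 : Fin 3) ≠ 2 by decide)
  have hUSW : (fun ω => (u ω, s ω)) ⟂ᵢ[μ] w := by
    simpa using hind.indepFun_prodMk hmeas 0 2 1 (by decide) (by decide)
  have hsgn : AEMeasurable (fun ω => u ω + s ω) μ := (hum.add hsm).aemeasurable
  calc ∫ ω, signFun (u ω + s ω) * frobInner (A ω) Y ∂μ
      = ∫ ω, ρ * (signFun (u ω + s ω) * u ω)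
          + √(1 - ρ ^ 2) * (signFun (u ω + s ω) * w ω) ∂μ := by
        congr 1 with ω
        rw [hvdec]
        ring
    _ = ρ * ∫ ω, signFun (u ω + s ω) * u ω ∂μ
          + √(1 - ρ ^ 2) * ∫ ω, signFun (u ω + s ω) * w ω ∂μ := by
        rw [integral_add, integral_const_mul, integral_const_mul]
        · exact (hU.integrable_of_gaussianReal.signFun_mul hsgn).const_mul ρ
        · exact (hW.integrable_of_gaussianReal.signFun_mul hsgn).const_mul _
    _ = √(2 / π) * (∫ ω, exp (-s ω ^ 2 / 2) ∂μ) * frobInner X Y := by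
        rw [integral_signFun_add_mul_of_indepFun hU hsm.aemeasurable hUS,
          integral_signFun_add_mul_eq_zero_of_indepFun hum hsm hwm.aestronglyMeasurable hUSW
            (by rw [hW.integral_eq, integral_id_gaussianReal]), hρ]
        ring

/-- Let `A` be a random matrix and `X, Y` fixed unit-Frobenius-norm matrices such that
`u = ⟨A,X⟩` and `v = ⟨A,Y⟩` are jointly Gaussian `N(0,1)` with correlation `ρ = ⟨X,Y⟩`
(joint Gaussianity encoded via `⟨A,Y⟩ = ρ⟨A,X⟩ + √(1-ρ²) w` with `w` standard Gaussian),
and let `s` be independent of `A`.  Then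
`E[Sign(⟨A,X⟩+s)·⟨A,Y⟩] = √(2/π) · E[exp(-s²/2)] · ⟨X,Y⟩`. -/
theorem sign_gaussian_matrix_expectation
    {Ω : Type*} [MeasurableSpace Ω] (μ : Measure Ω) [IsProbabilityMeasure μ]
    {d : ℕ} (A : Ω → Matrix (Fin d) (Fin d) ℝ) (s w : Ω → ℝ)
    (X Y : Matrix (Fin d) (Fin d) ℝ)
    (hX : frobNorm X = 1) (hY : frobNorm Y = 1)
    (ρ : ℝ) (hρ : ρ = frobInner X Y)
    (hum : Measurable fun ω => frobInner (A ω) X)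
    (hwm : Measurable w) (hsm : Measurable s)
    (hu : μ.map (fun ω => frobInner (A ω) X) = gaussianReal 0 1)
    (hw : μ.map w = gaussianReal 0 1)
    (hvdec : ∀ ω, frobInner (A ω) Y
      = ρ * frobInner (A ω) X + Real.sqrt (1 - ρ ^ 2) * w ω)
    (hind : iIndepFun
      ![fun ω => frobInner (A ω) X, w, s] μ) :
    ∫ ω, signFun (frobInner (A ω) X + s ω) * frobInner (A ω) Y ∂μ
      = Real.sqrt (2 / Real.pi) * (∫ ω, Real.exp (-(s ω) ^ 2 / 2) ∂μ) * frobInner X Y :=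
  sign_gaussian_matrix_expectation_general μ A s w X Y ρ hρ hum hwm hsm hu hw hvdec hind
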